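/- Suppose a nonnegative real-valued process V(t) satisfies E[V(t+1) | F_t] ≤ V(t) + B − η·G(t) whenever G(t) ≥ B/η, and E[V(t+1) | F_t] ≤ V(t) + B always, where G(t) ≥ 0 is F_t-measurable. Then limsup_{T→∞} (1/T) Σ_{t<T} E[G(t)] ≤ 2B/η, assuming E[V(0)] < ∞. -/

import Mathlib

open Finset MeasureTheory Filter

theorem conditional_drift_when_large
    {Ω : Type*} {m0 : MeasurableSpace Ω} {μ : Measure Ω} [IsProbabilityMeasure μ]
    (ℱ : Filtration ℕ m0)
    (V G : ℕ → Ω → ℝ)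
    (hVnn : ∀ t ω, 0 ≤ V t ω) (hGnn : ∀ t ω, 0 ≤ G t ω)
    (hVint : ∀ t, Integrable (V t) μ) (hGint : ∀ t, Integrable (G t) μ)
    (hGmeas : ∀ t, StronglyMeasurable[ℱ t] (G t))
    (B η : ℝ) (hB : 0 < B) (hη : 0 < η)
    (hV0 : Integrable (V 0) μ)
    (hdrift_large : ∀ t, ∀ᵐ ω ∂μ, B / η ≤ G t ω →
      (μ[V (t + 1)|ℱ t]) ω ≤ V t ω + B - η * G t ω)
    (hdrift_always : ∀ t, ∀ᵐ ω ∂μ, (μ[V (t + 1)|ℱ t]) ω ≤ V t ω + B) :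
    limsup (fun T : ℕ => (1 / (T : ℝ)) * ∑ t ∈ range T, ∫ ω, G t ω ∂μ) atTop ≤
      2 * B / η := by
  set c : ℕ → ℝ := fun t => ∫ ω, V t ω ∂μ with hc
  -- key one-step bound
  have hkey : ∀ t, η * ∫ ω, G t ω ∂μ ≤ c t - c (t + 1) + 2 * B := by
    intro t
    have hae : ∀ᵐ ω ∂μ,
        η * G t ω ≤ V t ω - (μ[V (t + 1)|ℱ t]) ω + 2 * B := by
      filter_upwards [hdrift_large t, hdrift_always t] with ω h1 h2
      by_cases h : B / η ≤ G t ω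
      · have := h1 h; nlinarith
      · push_neg at h
        have hlt : η * G t ω < B := by
          have h1' := mul_lt_mul_of_pos_left h hη
          rw [mul_div_cancel₀ B hη.ne'] at h1'
          exact h1'
        nlinarith [hlt, h2]
    have hint1 : Integrable (fun ω => η * G t ω) μ := (hGint t).const_mul η
    have hint2 : Integrable (fun ω => V t ω - (μ[V (t + 1)|ℱ t]) ω + 2 * B) μ :=
      ((hVint t).sub integrable_condExp).add (integrable_const _)
    have := integral_mono_ae hint1 hint2 hae
    rw [integral_const_mul] at this
    have e1 : ∫ ω, (V t ω - (μ[V (t + 1)|ℱ t]) ω + 2 * B) ∂μ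
        = (∫ ω, (V t ω - (μ[V (t + 1)|ℱ t]) ω) ∂μ) + ∫ _ω, (2 * B : ℝ) ∂μ :=
      integral_add ((hVint t).sub integrable_condExp) (integrable_const _)
    have e2 : ∫ ω, (V t ω - (μ[V (t + 1)|ℱ t]) ω) ∂μ
        = (∫ ω, V t ω ∂μ) - ∫ ω, (μ[V (t + 1)|ℱ t]) ω ∂μ :=
      integral_sub (hVint t) integrable_condExp
    have e3 : ∫ ω, (μ[V (t + 1)|ℱ t]) ω ∂μ = ∫ ω, V (t + 1) ω ∂μ :=
      integral_condExp (ℱ.le t)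
    rw [e1, e2, e3, integral_const, probReal_univ] at this
    simpa using this
  -- summed bound
  have hsum : ∀ T : ℕ, η * ∑ t ∈ range T, ∫ ω, G t ω ∂μ ≤ c 0 + 2 * B * T := by
    intro T
    have h1 : η * ∑ t ∈ range T, ∫ ω, G t ω ∂μ
        = ∑ t ∈ range T, η * ∫ ω, G t ω ∂μ := by rw [Finset.mul_sum]
    have h2 : ∑ t ∈ range T, (c t - c (t + 1) + 2 * B)
        = (c 0 - c T) + 2 * B * T := by
      rw [Finset.sum_add_distrib, Finset.sum_range_sub' c, Finset.sum_const,
        Finset.card_range, nsmul_eq_mul]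
      ring
    have h3 : (0 : ℝ) ≤ c T := integral_nonneg (fun ω => hVnn T ω)
    calc η * ∑ t ∈ range T, ∫ ω, G t ω ∂μ
        = ∑ t ∈ range T, η * ∫ ω, G t ω ∂μ := h1
      _ ≤ ∑ t ∈ range T, (c t - c (t + 1) + 2 * B) :=
          Finset.sum_le_sum fun t _ => hkey t
      _ = (c 0 - c T) + 2 * B * T := h2
      _ ≤ c 0 + 2 * B * T := by linarith
  set f : ℕ → ℝ := fun T => (1 / (T : ℝ)) * ∑ t ∈ range T, ∫ ω, G t ω ∂μ with hf
  set g : ℕ → ℝ := fun T => (c 0 / η) / T + 2 * B / η with hg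
  have hfg : ∀ᶠ T in atTop, f T ≤ g T := by
    filter_upwards [eventually_ge_atTop 1] with T hT
    have hTpos : (0 : ℝ) < T := by exact_mod_cast hT
    have h1 : ∑ t ∈ range T, ∫ ω, G t ω ∂μ ≤ (c 0 + 2 * B * T) / η :=
      (le_div_iff₀' hη).mpr (hsum T)
    have h2 : f T ≤ (1 / (T : ℝ)) * ((c 0 + 2 * B * T) / η) := by
      apply mul_le_mul_of_nonneg_left h1
      positivity
    refine h2.trans (le_of_eq ?_)
    simp only [hg]
    field_simp
  have hgl : Tendsto g atTop (nhds (2 * B / η)) := by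
    have := (tendsto_const_div_atTop_nhds_zero_nat (c 0 / η)).add
      (tendsto_const_nhds (x := 2 * B / η))
    simpa using this
  have hfnn : ∀ T, 0 ≤ f T := by
    intro T
    apply mul_nonneg (by positivity)
    exact Finset.sum_nonneg fun t _ => integral_nonneg fun ω => hGnn t ω
  calc limsup f atTop
      ≤ limsup g atTop :=
        limsup_le_limsup hfg (isCoboundedUnder_le_of_le atTop hfnn)
          hgl.isBoundedUnder_le
    _ = 2 * B / η := hgl.limsup_eq
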